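/- Let C be a dagger category, J a category, Ω a weakly initial class of objects of J, let (L, (l_A)) be a dagger limit of (D, Ω) and (M, (m_A)) a dagger limit of (E, Ω) for diagrams D, E : J ⥤ C, and let σ : D ⟹ E be an adjointable natural transformation. Then the unique morphism f : L ⟶ M satisfying m_A ∘ f = σ_A ∘ l_A for all A also satisfies f ∘ l_A† = m_A† ∘ σ_A for all A; that is, the map of limits induced by σ coincides with the map of colimits (for the daggered cocones) induced by σ. -/
import Mathlib


open CategoryTheory

universe v u v₁ u₁ v₂ u₂

class DaggerCategory (C : Type u) [Category.{v} C] where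
  dag : ∀ {A B : C}, (A ⟶ B) → (B ⟶ A)
  dag_id : ∀ (A : C), dag (𝟙 A) = 𝟙 A
  dag_comp : ∀ {A B X : C} (f : A ⟶ B) (g : B ⟶ X), dag (f ≫ g) = dag g ≫ dag f
  dag_dag : ∀ {A B : C} (f : A ⟶ B), dag (dag f) = f

postfix:max "†" => DaggerCategory.dag

section Defs

variable {C : Type u} [Category.{v} C] [DaggerCategory C]

/-- A morphism `f` is a partial isometry if `f ∘ f† ∘ f = f`. -/
def IsPartialIsometry {A B : C} (f : A ⟶ B) : Prop :=
  f ≫ f† ≫ f = f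

/-- A morphism `f : A ⟶ B` is unitary if `f† ∘ f = 𝟙 A` and `f ∘ f† = 𝟙 B`. -/
def IsUnitary {A B : C} (f : A ⟶ B) : Prop :=
  f ≫ f† = 𝟙 A ∧ f† ≫ f = 𝟙 B

/-- A morphism `f` is dagger monic (an isometry) if `f† ∘ f = 𝟙`. -/
def DaggerMonic {A B : C} (f : A ⟶ B) : Prop :=
  f ≫ f† = 𝟙 A

/-- `(L, l)` is a limit cone over the diagram `D`. -/
def IsLimitCone {J : Type u₁} [Category.{v₁} J] (D : J ⥤ C) (L : C)
    (l : ∀ j : J, L ⟶ D.obj j) : Prop :=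
  (∀ {j j' : J} (f : j ⟶ j'), l j ≫ D.map f = l j') ∧
  (∀ (M : C) (m : ∀ j : J, M ⟶ D.obj j),
    (∀ {j j' : J} (f : j ⟶ j'), m j ≫ D.map f = m j') →
    ∃! g : M ⟶ L, ∀ j : J, g ≫ l j = m j)

/-- A class of objects `Ω` is weakly initial when every object admits a morphism
from some member of `Ω`. -/
def WeaklyInitial {J : Type u₁} [Category.{v₁} J] (Ω : Set J) : Prop :=
  ∀ B : J, ∃ A ∈ Ω, Nonempty (A ⟶ B)

/-- `(L, l)` is a dagger limit of `(D, Ω)`: a limit cone whose legs at `Ω` are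
partial isometries with pairwise commuting induced projections. -/
def IsDaggerLimit {J : Type u₁} [Category.{v₁} J] (D : J ⥤ C) (Ω : Set J) (L : C)
    (l : ∀ j : J, L ⟶ D.obj j) : Prop :=
  IsLimitCone D L l ∧
  (∀ j ∈ Ω, IsPartialIsometry (l j)) ∧
  (∀ j ∈ Ω, ∀ j' ∈ Ω,
    (l j ≫ (l j)†) ≫ (l j' ≫ (l j')†) = (l j' ≫ (l j')†) ≫ (l j ≫ (l j)†))

end Defs

/-- A natural transformation `σ : D ⟶ E` between functors into a dagger category is
adjointable when the componentwise daggers form a natural transformation `E ⟶ D`. -/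
def Adjointable {C : Type u} [Category.{v} C] [DaggerCategory C]
    {J : Type u₁} [Category.{v₁} J] {D E : J ⥤ C} (σ : D ⟶ E) : Prop :=
  ∀ {j j' : J} (f : j ⟶ j'), E.map f ≫ (σ.app j')† = (σ.app j)† ≫ D.map f

/-- Given dagger limits `(L, l)` of `(D, Ω)` and `(M, m)` of `(E, Ω)` and an
adjointable `σ : D ⟹ E`, the unique morphism `f : L ⟶ M` with `m_A ∘ f = σ_A ∘ l_A` for all `A`
(the map of limits induced by `σ`) also satisfies `f ∘ l_A† = m_A† ∘ σ_A` for all `A`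
(it is the map of colimits for the daggered cocones induced by `σ`). -/
theorem map_of_limits_is_map_of_colimits {C : Type u} [Category.{v} C] [DaggerCategory C]
    {J : Type u₁} [Category.{v₁} J] (D E : J ⥤ C) (Ω : Set J) (hΩ : WeaklyInitial Ω)
    {L M : C} (l : ∀ j : J, L ⟶ D.obj j) (m : ∀ j : J, M ⟶ E.obj j)
    (hL : IsDaggerLimit D Ω L l) (hM : IsDaggerLimit E Ω M m)
    (σ : D ⟶ E) (hσ : Adjointable σ)
    (f : L ⟶ M) (hf : ∀ j : J, f ≫ m j = l j ≫ σ.app j) :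
    ∀ j : J, (l j)† ≫ f = σ.app j ≫ (m j)† := by
  obtain ⟨⟨hLcone, hLuniq⟩, hLpi, hLcomm⟩ := hL
  obtain ⟨⟨hMcone, hMuniq⟩, hMpi, hMcomm⟩ := hM
  -- the map of limits induced by σ† : E ⟹ D
  obtain ⟨g, hg, -⟩ := hLuniq M (fun j => m j ≫ (σ.app j)†) (by
    intro j j' k
    rw [Category.assoc, ← hσ k, ← Category.assoc, hMcone k])
  -- daggered legs of g
  have hgd : ∀ j : J, (l j)† ≫ g† = σ.app j ≫ (m j)† := by
    intro j
    have h := congrArg (fun x => x†) (hg j)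
    simpa only [DaggerCategory.dag_comp, DaggerCategory.dag_dag] using h
  -- partial isometry facts, unfolded
  have hpiL : ∀ A ∈ Ω, l A ≫ (l A)† ≫ l A = l A := fun A hA => hLpi A hA
  have hpiM : ∀ A ∈ Ω, m A ≫ (m A)† ≫ m A = m A := fun A hA => hMpi A hA
  -- key identity (d): f ≫ q_j = p_j ≫ g†
  have hd0 : ∀ j : J, f ≫ (m j ≫ (m j)†) = l j ≫ ((l j)† ≫ g†) := by
    intro j
    calc f ≫ (m j ≫ (m j)†) = (f ≫ m j) ≫ (m j)† := by simp only [Category.assoc]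
      _ = (l j ≫ σ.app j) ≫ (m j)† := by rw [hf j]
      _ = l j ≫ ((l j)† ≫ g†) := by rw [hgd j]; simp only [Category.assoc]
  have hd : ∀ (j : J) {Z : C} (t : M ⟶ Z), f ≫ m j ≫ (m j)† ≫ t = l j ≫ (l j)† ≫ g† ≫ t := by
    intro j Z t
    simpa only [Category.assoc] using congrArg (fun x => x ≫ t) (hd0 j)
  -- step (i): p_B absorbs f ≫ q_A ≫ m_B
  have h2 : ∀ A ∈ Ω, ∀ B ∈ Ω,
      f ≫ m A ≫ (m A)† ≫ m B = l B ≫ (l B)† ≫ g† ≫ m A ≫ (m A)† ≫ m B := by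
    intro A hA B hB
    calc f ≫ m A ≫ (m A)† ≫ m B
        = f ≫ m A ≫ (m A)† ≫ m B ≫ (m B)† ≫ m B := by
          simpa only [Category.assoc] using
            congrArg (fun x => f ≫ m A ≫ (m A)† ≫ x) (hpiM B hB).symm
      _ = f ≫ m B ≫ (m B)† ≫ m A ≫ (m A)† ≫ m B := by
          simpa only [Category.assoc] using
            congrArg (fun x => f ≫ x ≫ m B) (hMcomm A hA B hB)
      _ = l B ≫ (l B)† ≫ g† ≫ m A ≫ (m A)† ≫ m B := hd B _
  have hw : ∀ A ∈ Ω, ∀ B ∈ Ω,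
      l B ≫ (l B)† ≫ f ≫ m A ≫ (m A)† ≫ m B = f ≫ m A ≫ (m A)† ≫ m B := by
    intro A hA B hB
    calc l B ≫ (l B)† ≫ f ≫ m A ≫ (m A)† ≫ m B
        = l B ≫ (l B)† ≫ l B ≫ (l B)† ≫ g† ≫ m A ≫ (m A)† ≫ m B := by
          simpa only [Category.assoc] using
            congrArg (fun x => l B ≫ (l B)† ≫ x) (h2 A hA B hB)
      _ = l B ≫ (l B)† ≫ g† ≫ m A ≫ (m A)† ≫ m B := by
          simpa only [Category.assoc] using
            congrArg (fun x => x ≫ ((l B)† ≫ g† ≫ m A ≫ (m A)† ≫ m B)) (hpiL B hB)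
      _ = f ≫ m A ≫ (m A)† ≫ m B := (h2 A hA B hB).symm
  -- (CB): p_A ≫ f ≫ m_B = f ≫ q_A ≫ m_B for A, B ∈ Ω
  have hCB : ∀ A ∈ Ω, ∀ B ∈ Ω,
      l A ≫ (l A)† ≫ f ≫ m B = f ≫ m A ≫ (m A)† ≫ m B := by
    intro A hA B hB
    calc l A ≫ (l A)† ≫ f ≫ m B
        = l A ≫ (l A)† ≫ f ≫ m B ≫ (m B)† ≫ m B := by
          simpa only [Category.assoc] using
            congrArg (fun x => l A ≫ (l A)† ≫ f ≫ x) (hpiM B hB).symm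
      _ = l A ≫ (l A)† ≫ l B ≫ (l B)† ≫ g† ≫ m B := by
          simpa only [Category.assoc] using
            congrArg (fun x => l A ≫ (l A)† ≫ x) (hd B (m B))
      _ = l B ≫ (l B)† ≫ l A ≫ (l A)† ≫ g† ≫ m B := by
          simpa only [Category.assoc] using
            congrArg (fun x => x ≫ (g† ≫ m B)) (hLcomm A hA B hB)
      _ = l B ≫ (l B)† ≫ f ≫ m A ≫ (m A)† ≫ m B := by
          simpa only [Category.assoc] using
            congrArg (fun x => l B ≫ (l B)† ≫ x) (hd A (m B)).symm
      _ = f ≫ m A ≫ (m A)† ≫ m B := hw A hA B hB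
  -- extend (CB) to all legs
  have hCBall : ∀ A ∈ Ω, ∀ j : J,
      l A ≫ (l A)† ≫ f ≫ m j = f ≫ m A ≫ (m A)† ≫ m j := by
    intro A hA j
    obtain ⟨B, hB, ⟨k⟩⟩ := hΩ j
    calc l A ≫ (l A)† ≫ f ≫ m j
        = l A ≫ (l A)† ≫ f ≫ m B ≫ E.map k := by
          simpa only [Category.assoc] using
            congrArg (fun x => l A ≫ (l A)† ≫ f ≫ x) (hMcone k).symm
      _ = f ≫ m A ≫ (m A)† ≫ m B ≫ E.map k := by
          simpa only [Category.assoc] using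
            congrArg (fun x => x ≫ E.map k) (hCB A hA B hB)
      _ = f ≫ m A ≫ (m A)† ≫ m j := by
          simpa only [Category.assoc] using
            congrArg (fun x => f ≫ m A ≫ (m A)† ≫ x) (hMcone k)
  -- claim: p_A ≫ f = f ≫ q_A
  have hclaim : ∀ A ∈ Ω, (l A ≫ (l A)†) ≫ f = f ≫ (m A ≫ (m A)†) := by
    intro A hA
    have hu := hMuniq L (fun j => l A ≫ (l A)† ≫ f ≫ m j) (by
      intro j j' k
      simpa only [Category.assoc] using
        congrArg (fun x => l A ≫ (l A)† ≫ f ≫ x) (hMcone k))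
    exact hu.unique (fun j => by simp only [Category.assoc])
      (fun j => by simpa only [Category.assoc] using (hCBall A hA j).symm)
  -- goal at A ∈ Ω
  have hgoalA : ∀ A ∈ Ω, (l A)† ≫ f = σ.app A ≫ (m A)† := by
    intro A hA
    have hlpd : (l A)† ≫ l A ≫ (l A)† = (l A)† := by
      simpa only [DaggerCategory.dag_comp, DaggerCategory.dag_dag, Category.assoc] using
        congrArg (fun x => x†) (hpiL A hA)
    calc (l A)† ≫ f
        = ((l A)† ≫ l A ≫ (l A)†) ≫ f := by rw [hlpd]
      _ = (l A)† ≫ f ≫ m A ≫ (m A)† := by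
          simpa only [Category.assoc] using congrArg (fun x => (l A)† ≫ x) (hclaim A hA)
      _ = (l A)† ≫ l A ≫ σ.app A ≫ (m A)† := by
          simpa only [Category.assoc] using
            congrArg (fun x => (l A)† ≫ x ≫ (m A)†) (hf A)
      _ = (l A)† ≫ l A ≫ (l A)† ≫ g† := by
          simpa only [Category.assoc] using
            congrArg (fun x => (l A)† ≫ l A ≫ x) (hgd A).symm
      _ = (l A)† ≫ g† := by
          simpa only [Category.assoc] using congrArg (fun x => x ≫ g†) hlpd
      _ = σ.app A ≫ (m A)† := hgd A
  -- general j
  intro j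
  obtain ⟨A, hA, ⟨k⟩⟩ := hΩ j
  have h1 : σ.app j ≫ (E.map k)† = (D.map k)† ≫ σ.app A := by
    simpa only [DaggerCategory.dag_comp, DaggerCategory.dag_dag] using
      congrArg (fun x => x†) (hσ k)
  calc (l j)† ≫ f
      = (l A ≫ D.map k)† ≫ f := by rw [hLcone k]
    _ = (D.map k)† ≫ (l A)† ≫ f := by simp only [DaggerCategory.dag_comp, Category.assoc]
    _ = (D.map k)† ≫ σ.app A ≫ (m A)† := by rw [hgoalA A hA]
    _ = σ.app j ≫ (E.map k)† ≫ (m A)† := by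
        simpa only [Category.assoc] using congrArg (fun x => x ≫ (m A)†) h1.symm
    _ = σ.app j ≫ (m A ≫ E.map k)† := by simp only [DaggerCategory.dag_comp]
    _ = σ.app j ≫ (m j)† := by rw [hMcone k]
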